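/- arXiv:1511.06029 — 3 statements merged into one kernel-verified Lean document; each statement's English description precedes it below -/
import Mathlib

section
/- For a diagonal matrix B = diag(b) with b a vector of length N = 2^d, the k-th unfolding of the tensorized matrix B (with interleaved row-column index pairs) has the same rank as the k-th unfolding of the tensorized vector b. In particular, for d = 1 levels: the 2×2 diagonal matrix diag(b₁,b₂) rearranged with merged index ⟨i j⟩ as [b₁ 0 0 b₂]ᵀ has rank 1. -/
/-- The k-th unfolding (with interleaved row-column index pairs) of the
    tensorization of a diagonal matrix diag(b) has the same rank as the
    k-th unfolding of the tensorization of the vector b. -/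
theorem rank_unfolding_diagonal_eq_rank_unfolding_vector
    (d k : ℕ) (hk : k ≤ d) (b : (Fin d → Fin 2) → ℝ) :
    Matrix.rank
      (Matrix.of fun (x : {i : Fin d // (i : ℕ) < k} → Fin 2 × Fin 2)
          (y : {i : Fin d // ¬ (i : ℕ) < k} → Fin 2 × Fin 2) =>
        Matrix.diagonal b
          (fun i => if h : (i : ℕ) < k then (x ⟨i, h⟩).1 else (y ⟨i, h⟩).1)
          (fun i => if h : (i : ℕ) < k then (x ⟨i, h⟩).2 else (y ⟨i, h⟩).2)) =
    Matrix.rank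
      (Matrix.of fun (x : {i : Fin d // (i : ℕ) < k} → Fin 2)
          (y : {i : Fin d // ¬ (i : ℕ) < k} → Fin 2) =>
        b (fun i => if h : (i : ℕ) < k then x ⟨i, h⟩ else y ⟨i, h⟩)) := by
  classical
  set S := {i : Fin d // (i : ℕ) < k} with hS
  set T := {i : Fin d // ¬ (i : ℕ) < k} with hT
  set M : Matrix (S → Fin 2 × Fin 2) (T → Fin 2 × Fin 2) ℝ :=
    Matrix.of fun x y =>
      Matrix.diagonal b
        (fun i => if h : (i : ℕ) < k then (x ⟨i, h⟩).1 else (y ⟨i, h⟩).1)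
        (fun i => if h : (i : ℕ) < k then (x ⟨i, h⟩).2 else (y ⟨i, h⟩).2) with hM
  set N : Matrix (S → Fin 2) (T → Fin 2) ℝ :=
    Matrix.of fun x y =>
      b (fun i => if h : (i : ℕ) < k then x ⟨i, h⟩ else y ⟨i, h⟩) with hN
  -- key pointwise description of M in terms of N
  have key : ∀ (x : S → Fin 2 × Fin 2) (y : T → Fin 2 × Fin 2),
      M x y = if (∀ s : S, (x s).1 = (x s).2) ∧ (∀ t : T, (y t).1 = (y t).2)
        then N (fun s => (x s).1) (fun t => (y t).1) else 0 := by
    intro x y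
    have hcond : ((fun i : Fin d => if h : (i : ℕ) < k then (x ⟨i, h⟩).1 else (y ⟨i, h⟩).1)
        = (fun i : Fin d => if h : (i : ℕ) < k then (x ⟨i, h⟩).2 else (y ⟨i, h⟩).2)) ↔
        ((∀ s : S, (x s).1 = (x s).2) ∧ (∀ t : T, (y t).1 = (y t).2)) := by
      constructor
      · intro h
        constructor
        · intro s
          have := congrFun h s.1
          simpa [s.2] using this
        · intro t
          have := congrFun h t.1
          simpa [t.2] using this
      · rintro ⟨h1, h2⟩
        funext i
        by_cases h : (i : ℕ) < k
        · simpa [h] using h1 ⟨i, h⟩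
        · simpa [h] using h2 ⟨i, h⟩
    simp only [hM, hN, Matrix.of_apply, Matrix.diagonal_apply]
    by_cases hc : (∀ s : S, (x s).1 = (x s).2) ∧ (∀ t : T, (y t).1 = (y t).2)
    · rw [if_pos hc, if_pos (hcond.mpr hc)]
    · rw [if_neg hc, if_neg (fun h => hc (hcond.mp h))]
  -- selector matrices for M = A * N * B
  set A : Matrix (S → Fin 2 × Fin 2) (S → Fin 2) ℝ :=
    Matrix.of fun x u =>
      if u = (fun s => (x s).1) ∧ (∀ s : S, (x s).1 = (x s).2) then 1 else 0 with hA
  set B : Matrix (T → Fin 2) (T → Fin 2 × Fin 2) ℝ :=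
    Matrix.of fun v y =>
      if v = (fun t => (y t).1) ∧ (∀ t : T, (y t).1 = (y t).2) then 1 else 0 with hB
  have hMAB : M = A * (N * B) := by
    ext x y
    have hNB : (N * B) = Matrix.of fun (u : S → Fin 2) (y : T → Fin 2 × Fin 2) =>
        if (∀ t : T, (y t).1 = (y t).2) then N u (fun t => (y t).1) else 0 := by
      ext u y
      simp only [Matrix.mul_apply, hB, Matrix.of_apply]
      by_cases hq : (∀ t : T, (y t).1 = (y t).2)
      · rw [if_pos hq]
        rw [Finset.sum_eq_single (fun t => (y t).1)]
        · simp [hq]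
        · intro v _ hv; simp [hv]
        · intro h; exact absurd (Finset.mem_univ _) h
      · rw [if_neg hq]
        apply Finset.sum_eq_zero
        intro v _
        simp [hq]
    rw [hNB]
    simp only [Matrix.mul_apply, hA, Matrix.of_apply]
    by_cases hp : (∀ s : S, (x s).1 = (x s).2)
    · rw [Finset.sum_eq_single (fun s => (x s).1)]
      · simp only [hp, and_true, if_pos rfl, one_mul]
        rw [key x y]
        by_cases hq : (∀ t : T, (y t).1 = (y t).2) <;> simp [hp, hq]
      · intro u _ hu; simp [hu]
      · intro h; exact absurd (Finset.mem_univ _) h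
    · rw [key x y, if_neg (fun h => hp h.1)]
      exact (Finset.sum_eq_zero (fun u _ => by simp [hp])).symm
  -- selector matrices for N = A' * M * B'
  set A' : Matrix (S → Fin 2) (S → Fin 2 × Fin 2) ℝ :=
    Matrix.of fun u x => if x = (fun s => (u s, u s)) then 1 else 0 with hA'
  set B' : Matrix (T → Fin 2 × Fin 2) (T → Fin 2) ℝ :=
    Matrix.of fun y v => if y = (fun t => (v t, v t)) then 1 else 0 with hB'
  have hNAB : N = A' * (M * B') := by
    ext u v
    have hMB : (M * B') = Matrix.of fun (x : S → Fin 2 × Fin 2) (v : T → Fin 2) =>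
        M x (fun t => (v t, v t)) := by
      ext x v
      simp only [Matrix.mul_apply, hB', Matrix.of_apply]
      rw [Finset.sum_eq_single (fun t => (v t, v t))]
      · simp
      · intro y _ hy; simp [hy]
      · intro h; exact absurd (Finset.mem_univ _) h
    rw [hMB]
    simp only [Matrix.mul_apply, hA', Matrix.of_apply]
    rw [Finset.sum_eq_single (fun s => (u s, u s))]
    · rw [if_pos rfl, one_mul, key]
      simp
    · intro x _ hx; simp [hx]
    · intro h; exact absurd (Finset.mem_univ _) h
  refine le_antisymm ?_ ?_
  · rw [hMAB]
    exact le_trans (Matrix.rank_mul_le_right _ _)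
      (Matrix.rank_mul_le_left _ _)
  · rw [hNAB]
    exact le_trans (Matrix.rank_mul_le_right _ _)
      (Matrix.rank_mul_le_left _ _)
end

section
/- For a Toeplitz (translation-invariant) N×N matrix A with A(i,j) = f(i−j), the number of distinct columns of the k-th unfolding of its tensorization is at most 2·2^{d−k} − 1; hence each unfolding has rank at most 2·2^{d−k} − 1. -/
private lemma geom2_aux (n : ℕ) : ∑ j ∈ Finset.range n, (2:ℤ) ^ j = 2 ^ n - 1 := by
  induction n with
  | zero => simp
  | succ n ih => rw [Finset.sum_range_succ, ih, pow_succ]; ring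

set_option maxHeartbeats 1000000 in
/-- For a Toeplitz matrix A(i,j) = f(i−j) on N = 2^d points (binary digits,
    most significant first), the k-th unfolding of its tensorization has at
    most 2·2^(d−k) − 1 distinct columns, hence rank at most 2·2^(d−k) − 1. -/
theorem toeplitz_unfolding_rank_le
    (d k : ℕ) (hk : k ≤ d) (f : ℤ → ℝ) :
    let num : (Fin d → Fin 2) → ℤ :=
      fun u => ∑ i, ((u i : ℕ) : ℤ) * 2 ^ (d - 1 - (i : ℕ))
    let U : Matrix ({i : Fin d // (i : ℕ) < k} → Fin 2 × Fin 2)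
        ({i : Fin d // ¬ (i : ℕ) < k} → Fin 2 × Fin 2) ℝ :=
      Matrix.of fun x y =>
        f (num (fun i => if h : (i : ℕ) < k then (x ⟨i, h⟩).1 else (y ⟨i, h⟩).1) -
           num (fun i => if h : (i : ℕ) < k then (x ⟨i, h⟩).2 else (y ⟨i, h⟩).2))
    ((@Finset.image _ _ (Classical.decEq _)
        (fun y => fun x => U x y) Finset.univ).card ≤ 2 * 2 ^ (d - k) - 1) ∧
      U.rank ≤ 2 * 2 ^ (d - k) - 1 := by
  classical
  intro num U
  set n := d - k with hn
  -- split any sum over Fin d into low-index and high-index parts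
  have hsplit : ∀ g : Fin d → ℤ, (∑ i, g i) =
      (∑ i : {i : Fin d // (i : ℕ) < k}, g i) +
      (∑ i : {i : Fin d // ¬ (i : ℕ) < k}, g i) := by
    intro g
    rw [← Finset.sum_filter_add_sum_filter_not Finset.univ (fun i : Fin d => (i : ℕ) < k)]
    congr 1
    · rw [Finset.sum_subtype]; intro x; simp
    · rw [Finset.sum_subtype]; intro x; simp
  set Ax : ({i : Fin d // (i : ℕ) < k} → Fin 2 × Fin 2) → ℤ :=
    fun x => (∑ i, (((x i).1 : ℕ) : ℤ) * 2 ^ (d - 1 - (i : ℕ)))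
           - (∑ i, (((x i).2 : ℕ) : ℤ) * 2 ^ (d - 1 - (i : ℕ))) with hAx
  set B : ({i : Fin d // ¬ (i : ℕ) < k} → Fin 2 × Fin 2) → ℤ :=
    fun y => (∑ i, (((y i).1 : ℕ) : ℤ) * 2 ^ (d - 1 - (i : ℕ)))
           - (∑ i, (((y i).2 : ℕ) : ℤ) * 2 ^ (d - 1 - (i : ℕ))) with hB
  -- U splits
  have hU : ∀ x y, U x y = f (Ax x + B y) := by
    intro x y
    show f _ = f (Ax x + B y)
    congr 1
    simp only [num, hAx, hB]
    rw [hsplit, hsplit]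
    have l1 : ∀ i : {i : Fin d // (i : ℕ) < k},
        (if h : ((i : Fin d) : ℕ) < k then (x ⟨i, h⟩).1 else (y ⟨i, h⟩).1) = (x i).1 :=
      fun i => dif_pos i.2
    have l2 : ∀ i : {i : Fin d // (i : ℕ) < k},
        (if h : ((i : Fin d) : ℕ) < k then (x ⟨i, h⟩).2 else (y ⟨i, h⟩).2) = (x i).2 :=
      fun i => dif_pos i.2
    have l3 : ∀ i : {i : Fin d // ¬ (i : ℕ) < k},
        (if h : ((i : Fin d) : ℕ) < k then (x ⟨i, h⟩).1 else (y ⟨i, h⟩).1) = (y i).1 :=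
      fun i => dif_neg i.2
    have l4 : ∀ i : {i : Fin d // ¬ (i : ℕ) < k},
        (if h : ((i : Fin d) : ℕ) < k then (x ⟨i, h⟩).2 else (y ⟨i, h⟩).2) = (y i).2 :=
      fun i => dif_neg i.2
    simp only [l1, l2, l3, l4]
    ring
  -- total weight of the low-significance digits
  have hM : (∑ i : {i : Fin d // ¬ (i : ℕ) < k}, (2:ℤ) ^ (d - 1 - ((i : Fin d) : ℕ)))
      = 2 ^ n - 1 := by
    have h1 : (∑ i ∈ Finset.univ.filter (fun i : Fin d => ¬ (i : ℕ) < k),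
            (2:ℤ) ^ (d - 1 - (i : ℕ)))
        = ∑ i : {i : Fin d // ¬ (i : ℕ) < k}, (2:ℤ) ^ (d - 1 - ((i : Fin d) : ℕ)) := by
      rw [Finset.sum_subtype]; intro x; simp
    rw [← h1, Finset.sum_filter,
      Fin.sum_univ_eq_sum_range (fun m => if ¬ m < k then (2:ℤ) ^ (d - 1 - m) else 0) d,
      ← Finset.sum_filter]
    have h2 : (Finset.range d).filter (fun m => ¬ m < k) = Finset.Ico k d := by
      ext m; simp [Finset.mem_Ico]; omega
    rw [h2, Finset.sum_Ico_eq_sum_range]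
    have h3 : ∀ j ∈ Finset.range (d - k), (2:ℤ) ^ (d - 1 - (k + j)) = 2 ^ (n - 1 - j) := by
      intro j hj
      congr 1
      omega
    rw [Finset.sum_congr rfl h3, Finset.sum_range_reflect (fun j => (2:ℤ) ^ j) n,
      geom2_aux]
  -- bounds on a low-part sum
  have hL : ∀ v : {i : Fin d // ¬ (i : ℕ) < k} → Fin 2,
      (0 ≤ ∑ i, ((v i : ℕ) : ℤ) * 2 ^ (d - 1 - ((i : Fin d) : ℕ))) ∧
      (∑ i, ((v i : ℕ) : ℤ) * 2 ^ (d - 1 - ((i : Fin d) : ℕ))) ≤ 2 ^ n - 1 := by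
    intro v
    constructor
    · exact Finset.sum_nonneg fun i _ => by positivity
    · calc (∑ i, ((v i : ℕ) : ℤ) * 2 ^ (d - 1 - ((i : Fin d) : ℕ)))
          ≤ ∑ i : {i : Fin d // ¬ (i : ℕ) < k}, (2:ℤ) ^ (d - 1 - ((i : Fin d) : ℕ)) := by
            refine Finset.sum_le_sum fun i _ => ?_
            have hv : ((v i : ℕ) : ℤ) ≤ 1 := by
              have := (v i).2
              omega
            nlinarith [pow_pos (by norm_num : (0:ℤ) < 2) (d - 1 - ((i : Fin d) : ℕ))]
        _ = 2 ^ n - 1 := hM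
  have hBmem : ∀ y, B y ∈ Finset.Icc (-(2 ^ n - 1) : ℤ) (2 ^ n - 1) := by
    intro y
    have h1 := hL fun i => (y i).1
    have h2 := hL fun i => (y i).2
    simp only [hB, Finset.mem_Icc]
    constructor <;> linarith [h1.1, h1.2, h2.1, h2.2]
  -- the column map factors through B
  have hcol : (fun y => fun x => U x y)
      = (fun t => fun x => f (Ax x + t)) ∘ B :=
    funext fun y => funext fun x => hU x y
  -- cardinality bound
  have hIcc : (Finset.Icc (-(2 ^ n - 1) : ℤ) (2 ^ n - 1)).card = 2 * 2 ^ n - 1 := by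
    rw [Int.card_Icc]
    have hcast : ((2 ^ n : ℕ) : ℤ) = 2 ^ n := by push_cast; ring
    have hpos : 1 ≤ 2 ^ n := Nat.one_le_two_pow
    omega
  have hcard : (@Finset.image _ _ (Classical.decEq _)
      (fun y => fun x => U x y) Finset.univ).card ≤ 2 * 2 ^ n - 1 := by
    have hsurj : Set.SurjOn (fun t => fun x => f (Ax x + t))
        ↑(Finset.image B Finset.univ)
        ↑(@Finset.image _ _ (Classical.decEq _) (fun y => fun x => U x y) Finset.univ) := by
      intro c hc
      rw [Finset.mem_coe, @Finset.mem_image _ _ (Classical.decEq _)] at hc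
      obtain ⟨y, -, rfl⟩ := hc
      refine ⟨B y, ?_, ?_⟩
      · rw [Finset.mem_coe, Finset.mem_image]
        exact ⟨y, Finset.mem_univ y, rfl⟩
      · exact funext fun x => (hU x y).symm
    calc (@Finset.image _ _ (Classical.decEq _) (fun y => fun x => U x y) Finset.univ).card
        ≤ (Finset.image B Finset.univ).card :=
          Finset.card_le_card_of_surjOn _ hsurj
      _ ≤ (Finset.Icc (-(2 ^ n - 1) : ℤ) (2 ^ n - 1)).card := by
          refine Finset.card_le_card ?_
          intro t ht
          obtain ⟨y, -, rfl⟩ := Finset.mem_image.mp ht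
          exact hBmem y
      _ = 2 * 2 ^ n - 1 := hIcc
  refine ⟨hcard, ?_⟩
  -- rank bound: factor U through the finset of its columns
  set S := (@Finset.image _ _ (Classical.decEq _)
      (fun y => fun x => U x y) Finset.univ) with hS
  have hfac : U = (Matrix.of fun x (s : S) => (s : _ → ℝ) x) *
      (Matrix.of fun (s : S) y => if (fun x => U x y) = (s : _) then (1:ℝ) else 0) := by
    ext x y
    rw [Matrix.mul_apply]
    have hc : (fun x => U x y) ∈ S := by
      rw [hS, @Finset.mem_image _ _ (Classical.decEq _)]
      exact ⟨y, Finset.mem_univ y, rfl⟩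
    rw [Finset.sum_eq_single (⟨fun x => U x y, hc⟩ : S)]
    · simp
    · intro s _ hne
      have hne' : ¬ ((fun x => U x y) = (s : _ → ℝ)) :=
        fun h => hne (Subtype.ext h.symm)
      simp only [Matrix.of_apply]
      rw [if_neg hne', mul_zero]
    · intro h; exact absurd (Finset.mem_univ _) h
  have h1 : U.rank ≤ (Matrix.of fun x (s : S) => s.1 x).rank := by
    rw [hfac]
    exact Matrix.rank_mul_le_left _ _
  have h2 : (Matrix.of fun x (s : S) => s.1 x).rank ≤ Fintype.card S :=
    Matrix.rank_le_card_width _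
  have h3 : Fintype.card S = S.card := Fintype.card_coe S
  omega
end

section
/- The best Frobenius-norm approximation of A by a single Kronecker product B ⊗ C (with B of size m₁×n₁ and C of size m₂×n₂) has error equal to (Σ_{k≥2} σ_k²)^{1/2}, where σ₁ ≥ σ₂ ≥ … are the singular values of the rearranged matrix Ã with Ã(⟨i₁,j₁⟩,⟨i₂,j₂⟩) = A(⟨i₁,i₂⟩,⟨j₁,j₂⟩); it is achieved by taking vec(B)vec(C)ᵀ equal to the best rank-1 approximation σ₁u₁v₁ᵀ of Ã. -/
open Matrix
open scoped Kronecker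

/-- Frobenius norm. -/
noncomputable def frob {m n : Type*} [Fintype m] [Fintype n] (M : Matrix m n ℝ) : ℝ :=
  Real.sqrt (∑ i, ∑ j, (M i j) ^ 2)

/-!
The rearrangement `A ↦ Ã` only permutes entries, so it preserves the Frobenius norm, and it sends
`B ⊗ C` to the rank-one matrix `vec B (vec C)ᵀ`; every rank-one matrix arises this way. The problem
is therefore the best rank-one approximation of `M = Ã`. Expanding,
`‖M - u vᵀ‖² = ‖M‖² - 2 uᵀMv + |u|²|v|²` with `‖M‖² = tr (MᵀM) = Σ λᵢ`. By Cauchy–Schwarz and the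
Rayleigh bound `|Mv|² ≤ λ_max |v|²` we get `(uᵀMv)² ≤ λ_max |u|²|v|²`, hence
`2 uᵀMv ≤ λ_max + |u|²|v|²` and `‖M - u vᵀ‖² ≥ Σ λᵢ - λ_max`. Equality holds for a unit
eigenvector `v` of `MᵀM` for `λ_max` and `u = Mv`.
-/

namespace Matrix

lemma isHermitian_transpose_mul_self {α β : Type*} [Fintype α] (M : Matrix α β ℝ) :
    (Mᵀ * M).IsHermitian := by
  simpa using isHermitian_conjTranspose_mul_self M

variable {α β : Type*} [Fintype α] [Fintype β]

lemma dotProduct_transpose_mul_self_mulVec (M : Matrix α β ℝ) (v : β → ℝ) :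
    v ⬝ᵥ ((Mᵀ * M) *ᵥ v) = (M *ᵥ v) ⬝ᵥ (M *ᵥ v) := by
  rw [← mulVec_mulVec, dotProduct_mulVec, vecMul_transpose]

namespace IsHermitian

variable [DecidableEq β] {A : Matrix β β ℝ}

lemma dotProduct_eigenvectorBasis_self (hA : A.IsHermitian) (i : β) :
    ⇑(hA.eigenvectorBasis i) ⬝ᵥ ⇑(hA.eigenvectorBasis i) = 1 := by
  have h := real_inner_self_eq_norm_sq (hA.eigenvectorBasis i)
  rw [hA.eigenvectorBasis.orthonormal.1 i, one_pow] at h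
  rwa [EuclideanSpace.inner_eq_star_dotProduct, star_trivial] at h

lemma dotProduct_mulVec_le_iSup_eigenvalues_mul (hA : A.IsHermitian) (v : β → ℝ) :
    v ⬝ᵥ (A *ᵥ v) ≤ (⨆ i, hA.eigenvalues i) * (v ⬝ᵥ v) := by
  set b := hA.eigenvectorBasis
  have hcoord (i : β) : (A *ᵥ v) ⬝ᵥ b i = hA.eigenvalues i * (v ⬝ᵥ b i) := by
    rw [dotProduct_comm, dotProduct_mulVec, ← mulVec_transpose,
      ← conjTranspose_eq_transpose_of_trivial, hA.eq, hA.mulVec_eigenvectorBasis, smul_dotProduct,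
      smul_eq_mul, dotProduct_comm]
  have hparseval (w : β → ℝ) : v ⬝ᵥ w = ∑ i, (v ⬝ᵥ b i) * (w ⬝ᵥ b i) := by
    simpa [EuclideanSpace.inner_eq_star_dotProduct, dotProduct_comm] using
      (b.sum_inner_mul_inner (WithLp.toLp 2 v) (WithLp.toLp 2 w)).symm
  rw [hparseval, hparseval v, Finset.mul_sum]
  refine Finset.sum_le_sum fun i _ => ?_
  rw [hcoord, mul_left_comm]
  exact mul_le_mul_of_nonneg_right (le_ciSup (Finite.bddAbove_range hA.eigenvalues) i)
    (mul_self_nonneg _)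

end IsHermitian

def rearrange {m₁ m₂ n₁ n₂ R : Type*} (A : Matrix (m₁ × m₂) (n₁ × n₂) R) :
    Matrix (m₁ × n₁) (m₂ × n₂) R :=
  of fun p q => A (p.1, q.1) (p.2, q.2)

section rearrange

variable {m₁ m₂ n₁ n₂ R : Type*}

lemma rearrange_sub [Sub R] (A A' : Matrix (m₁ × m₂) (n₁ × n₂) R) :
    rearrange (A - A') = rearrange A - rearrange A' :=
  rfl

lemma rearrange_kronecker [Mul R] (B : Matrix m₁ n₁ R) (C : Matrix m₂ n₂ R) :
    rearrange (B ⊗ₖ C) = vecMulVec (Function.uncurry B) (Function.uncurry C) :=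
  rfl

end rearrange

end Matrix

section frob

variable {α β : Type*} [Fintype α] [Fintype β]

lemma frob_nonneg (M : Matrix α β ℝ) : 0 ≤ frob M :=
  Real.sqrt_nonneg _

lemma frob_sq (M : Matrix α β ℝ) : frob M ^ 2 = ∑ p, ∑ q, M p q ^ 2 :=
  Real.sq_sqrt (by positivity)

lemma frob_rearrange {m₁ m₂ n₁ n₂ : Type*} [Fintype m₁] [Fintype m₂] [Fintype n₁] [Fintype n₂]
    (A : Matrix (m₁ × m₂) (n₁ × n₂) ℝ) : frob (rearrange A) = frob A := by
  simp only [frob, rearrange, of_apply, ← Fintype.sum_prod_type']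
  congr 1
  exact (Equiv.prodProdProdComm m₁ n₁ m₂ n₂).sum_comp fun x => A x.1 x.2 ^ 2

lemma frob_sq_eq_sum_eigenvalues [DecidableEq β] (M : Matrix α β ℝ) :
    frob M ^ 2 = ∑ i, (isHermitian_transpose_mul_self M).eigenvalues i := by
  have htrace : (Mᵀ * M).trace = ∑ p, ∑ q, M p q ^ 2 := by
    simp only [trace, diag_apply, mul_apply, transpose_apply, sq]
    exact Finset.sum_comm
  rw [frob_sq, ← htrace, (isHermitian_transpose_mul_self M).trace_eq_sum_eigenvalues]
  simp

lemma frob_sq_sub_vecMulVec (M : Matrix α β ℝ) (u : α → ℝ) (v : β → ℝ) :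
    frob (M - vecMulVec u v) ^ 2 = frob M ^ 2 - 2 * (u ⬝ᵥ (M *ᵥ v)) + (u ⬝ᵥ u) * (v ⬝ᵥ v) := by
  have hcross : u ⬝ᵥ (M *ᵥ v) = ∑ p, ∑ q, u p * M p q * v q := by
    simp only [dotProduct, mulVec, Finset.mul_sum, mul_assoc]
  have hnorms : (u ⬝ᵥ u) * (v ⬝ᵥ v) = ∑ p, ∑ q, (u p * v q) ^ 2 := by
    simp only [dotProduct, Finset.sum_mul_sum, sq, mul_mul_mul_comm]
  rw [frob_sq, frob_sq, hcross, hnorms]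
  simp only [Matrix.sub_apply, vecMulVec_apply, Finset.mul_sum, ← Finset.sum_sub_distrib,
    ← Finset.sum_add_distrib]
  exact Finset.sum_congr rfl fun p _ => Finset.sum_congr rfl fun q _ => by ring

variable [DecidableEq β]

theorem sqrt_sum_eigenvalues_sub_iSup_le_frob_sub_vecMulVec (M : Matrix α β ℝ)
    (u : α → ℝ) (v : β → ℝ) :
    Real.sqrt (∑ i, (isHermitian_transpose_mul_self M).eigenvalues i -
      ⨆ i, (isHermitian_transpose_mul_self M).eigenvalues i) ≤ frob (M - vecMulVec u v) := by
  rw [← Real.sqrt_sq (frob_nonneg _), frob_sq_sub_vecMulVec, frob_sq_eq_sum_eigenvalues]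
  refine Real.sqrt_le_sqrt ?_
  have hcs : (u ⬝ᵥ (M *ᵥ v)) ^ 2 ≤ (u ⬝ᵥ u) * ((M *ᵥ v) ⬝ᵥ (M *ᵥ v)) := by
    simpa only [dotProduct, sq] using Finset.sum_mul_sq_le_sq_mul_sq Finset.univ u (M *ᵥ v)
  set t := u ⬝ᵥ (M *ᵥ v)
  set lam := ⨆ i, (isHermitian_transpose_mul_self M).eigenvalues i
  set a := (u ⬝ᵥ u) * (v ⬝ᵥ v)
  have hlam : 0 ≤ lam := Real.iSup_nonneg (eigenvalues_conjTranspose_mul_self_nonneg M)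
  have hu : 0 ≤ u ⬝ᵥ u := Finset.sum_nonneg fun _ _ => mul_self_nonneg _
  have ha : 0 ≤ a := mul_nonneg hu (Finset.sum_nonneg fun _ _ => mul_self_nonneg _)
  have hrayleigh : (M *ᵥ v) ⬝ᵥ (M *ᵥ v) ≤ lam * (v ⬝ᵥ v) := by
    rw [← dotProduct_transpose_mul_self_mulVec]
    exact (isHermitian_transpose_mul_self M).dotProduct_mulVec_le_iSup_eigenvalues_mul v
  have ht : t ^ 2 ≤ lam * a :=
    hcs.trans ((mul_le_mul_of_nonneg_left hrayleigh hu).trans_eq (by ring))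
  have hamgm : 2 * t ≤ lam + a := by nlinarith [sq_nonneg (lam - a)]
  linarith

theorem exists_frob_sub_vecMulVec_eq (M : Matrix α β ℝ) :
    ∃ (u : α → ℝ) (v : β → ℝ), frob (M - vecMulVec u v) =
      Real.sqrt (∑ i, (isHermitian_transpose_mul_self M).eigenvalues i -
        ⨆ i, (isHermitian_transpose_mul_self M).eigenvalues i) := by
  set hM := isHermitian_transpose_mul_self M
  rcases isEmpty_or_nonempty β with hβ | hβ
  · exact ⟨0, 0, by simp [frob]⟩
  obtain ⟨i, hi⟩ := exists_eq_ciSup_of_finite (f := hM.eigenvalues)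
  set v := ⇑(hM.eigenvectorBasis i)
  have hv : v ⬝ᵥ v = 1 := hM.dotProduct_eigenvectorBasis_self i
  have hMv : (M *ᵥ v) ⬝ᵥ (M *ᵥ v) = hM.eigenvalues i := by
    rw [← dotProduct_transpose_mul_self_mulVec, hM.mulVec_eigenvectorBasis, dotProduct_smul, hv,
      smul_eq_mul, mul_one]
  refine ⟨M *ᵥ v, v, ?_⟩
  rw [← Real.sqrt_sq (frob_nonneg _), frob_sq_sub_vecMulVec, frob_sq_eq_sum_eigenvalues, hv, hMv,
    ← hi]
  ring_nf

end frob

/-- The best Frobenius-norm approximation of A by a single Kronecker product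
    B ⊗ C has error (Σ_{k≥2} σ_k²)^{1/2} = (Σ eig − max eig)^{1/2}, where the
    eigenvalues are those of Ãᴴ Ã for the rearranged matrix Ã, and it is
    achieved. -/
theorem best_kronecker_approx_error
    {m₁ m₂ n₁ n₂ : Type*} [Fintype m₁] [Fintype m₂] [Fintype n₁] [Fintype n₂]
    [DecidableEq m₂] [DecidableEq n₂]
    (A : Matrix (m₁ × m₂) (n₁ × n₂) ℝ) :
    let Atil : Matrix (m₁ × n₁) (m₂ × n₂) ℝ :=
      Matrix.of fun p q => A (p.1, q.1) (p.2, q.2)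
    let eig := (show (Atilᵀ * Atil).IsHermitian by
      simpa using Matrix.isHermitian_conjTranspose_mul_self Atil).eigenvalues
    let err := Real.sqrt ((∑ i, eig i) - ⨆ i, eig i)
    (∃ (B : Matrix m₁ n₁ ℝ) (C : Matrix m₂ n₂ ℝ), frob (A - B ⊗ₖ C) = err) ∧
      ∀ (B : Matrix m₁ n₁ ℝ) (C : Matrix m₂ n₂ ℝ), err ≤ frob (A - B ⊗ₖ C) := by
  intro Atil eig err
  have hfrob (B : Matrix m₁ n₁ ℝ) (C : Matrix m₂ n₂ ℝ) : frob (A - B ⊗ₖ C) =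
      frob (rearrange A - vecMulVec (Function.uncurry B) (Function.uncurry C)) := by
    rw [← frob_rearrange, rearrange_sub, rearrange_kronecker]
  refine ⟨?_, fun B C => hfrob B C ▸ sqrt_sum_eigenvalues_sub_iSup_le_frob_sub_vecMulVec _ _ _⟩
  obtain ⟨u, v, huv⟩ := exists_frob_sub_vecMulVec_eq (rearrange A)
  exact ⟨of (Function.curry u), of (Function.curry v), (hfrob _ _).trans huv⟩
end
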